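/- arXiv:2106.15666 — 4 statements merged into one kernel-verified Lean document; each statement's English description precedes it below -/
import Mathlib

section
/- Let V be a finite index set, X and Z finite types, and A_v : X × Z → ℂ a complex core for each v ∈ V. The unnormalized distribution of the fully-decohered Born machine with cores A_v, namely P(x) = ∑_{z∈Z} ∏_{v∈V} A_v(x,z) · conj(A_v(x,z)), equals the unnormalized distribution U(x) = ∑_{z∈Z} ∏_{v∈V} φ_v(x,z) of the discrete undirected graphical model whose clique potentials are φ_v(x,z) = |A_v(x,z)|². Consequently, if ∑_{x∈X} P(x) > 0, the normalized probability distributions of the two models are identical: P(x)/∑_{x'} P(x') = U(x)/∑_{x'} U(x') for all x ∈ X. -/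
open Finset ComplexConjugate

theorem Complex.sum_prod_mul_conj {κ ι : Type*} (s : Finset κ) (t : Finset ι) (a : κ → ι → ℂ) :
    ∑ z ∈ s, ∏ v ∈ t, a z v * conj (a z v) = ((∑ z ∈ s, ∏ v ∈ t, ‖a z v‖ ^ 2 : ℝ) : ℂ) := by
  push_cast
  simp_rw [Complex.mul_conj']

/-- Theorem 1 of the paper: The unnormalized distribution of a
fully-decohered Born machine with cores `A_v` equals the unnormalized distribution of
the discrete UGM with clique potentials `φ_v(x,z) = |A_v(x,z)|²`, and if the total mass
is positive, the normalized probability distributions of the two models coincide. -/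
theorem fully_decohered_bm_eq_ugm
    {V X Z : Type*} [Fintype V] [Fintype X] [Fintype Z]
    (A : V → X × Z → ℂ) (φ : V → X × Z → ℝ)
    (hφ : ∀ v x z, φ v (x, z) = ‖A v (x, z)‖ ^ 2) :
    (∀ x : X,
      (∑ z : Z, ∏ v : V, A v (x, z) * (starRingEnd ℂ) (A v (x, z)))
        = ((∑ z : Z, ∏ v : V, φ v (x, z) : ℝ) : ℂ)) ∧
    ((0 < ∑ x : X, (∑ z : Z, ∏ v : V, A v (x, z) * (starRingEnd ℂ) (A v (x, z))).re) →
      ∀ x : X,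
        (∑ z : Z, ∏ v : V, A v (x, z) * (starRingEnd ℂ) (A v (x, z)))
            / (∑ x' : X, ∑ z : Z, ∏ v : V, A v (x', z) * (starRingEnd ℂ) (A v (x', z)))
          = (((∑ z : Z, ∏ v : V, φ v (x, z))
              / (∑ x' : X, ∑ z : Z, ∏ v : V, φ v (x', z)) : ℝ) : ℂ)) := by
  have born_eq_ugm : ∀ x : X,
      (∑ z : Z, ∏ v : V, A v (x, z) * conj (A v (x, z)))
        = ((∑ z : Z, ∏ v : V, φ v (x, z) : ℝ) : ℂ) := fun x => by
    simp_rw [hφ, Complex.sum_prod_mul_conj univ univ fun z v => A v (x, z)]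
  refine ⟨born_eq_ugm, fun _ x => ?_⟩
  simp_rw [born_eq_ugm, ← Complex.ofReal_sum, ← Complex.ofReal_div]
end

section
/- Let V be a finite index set, X and Z finite types, φ_v : X × Z → ℝ≥0 nonnegative clique potentials, and θ_v : X × Z → ℝ arbitrary real-valued phase functions, for v ∈ V. Define complex cores A_v(x,z) = exp(2π i θ_v(x,z)) · √(φ_v(x,z)). Then the unnormalized distribution of the fully-decohered Born machine with cores A_v, P(x) = ∑_{z∈Z} ∏_{v∈V} A_v(x,z)·conj(A_v(x,z)), equals the unnormalized UGM distribution U(x) = ∑_{z∈Z} ∏_{v∈V} φ_v(x,z) for every x ∈ X; in particular the result is independent of the choice of the phases θ_v, and if ∑_x U(x) > 0 the normalized distributions coincide. -/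
/-!
Each factor `A_v · conj A_v` is `|A_v|² = |exp(2πiθ_v)|² · φ_v = φ_v`, since a pure phase has modulus
one. Hence the two unnormalized distributions agree termwise, and so do their normalizations.
-/

open Complex

theorem mul_conj_exp_two_pi_I_mul_ofReal (t r : ℝ) :
    exp (2 * Real.pi * I * t) * r * (starRingEnd ℂ) (exp (2 * Real.pi * I * t) * r)
      = ((r ^ 2 : ℝ) : ℂ) := by
  have h_phase : ‖exp (2 * Real.pi * I * t)‖ = 1 := by
    rw [show 2 * Real.pi * I * t = ((2 * Real.pi * t : ℝ) : ℂ) * I by push_cast; ring]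
    exact norm_exp_ofReal_mul_I _
  rw [mul_conj, normSq_eq_norm_sq, norm_mul, h_phase, one_mul, norm_real, Real.norm_eq_abs,
    sq_abs]

section Distributions

variable {V X Z : Type*} [Fintype V] [Fintype Z]

def bornMachineUnnormalized (A : V → X × Z → ℂ) (x : X) : ℂ :=
  ∑ z : Z, ∏ v : V, A v (x, z) * (starRingEnd ℂ) (A v (x, z))

def ugmUnnormalized (φ : V → X × Z → NNReal) (x : X) : NNReal :=
  ∑ z : Z, ∏ v : V, φ v (x, z)

theorem bornMachineUnnormalized_eq_ugmUnnormalized {A : V → X × Z → ℂ} {φ : V → X × Z → NNReal}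
    (h : ∀ v x z, A v (x, z) * (starRingEnd ℂ) (A v (x, z)) = ((φ v (x, z) : ℝ) : ℂ)) (x : X) :
    bornMachineUnnormalized A x = ((ugmUnnormalized φ x : ℝ) : ℂ) := by
  simp only [bornMachineUnnormalized, ugmUnnormalized, h]
  push_cast
  rfl

end Distributions

/-- Corollary 2 of the paper: Defining Born machine cores
`A_v(x,z) = exp(2πi θ_v(x,z)) √(φ_v(x,z))` from UGM clique potentials `φ_v` and arbitrary
real phases `θ_v`, the fully-decohered Born machine with cores `A_v` has the same
unnormalized distribution as the UGM with potentials `φ_v`, independently of `θ_v`, and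
the normalized distributions coincide whenever the total UGM mass is positive. -/
theorem ugm_as_fully_decohered_bm
    {V X Z : Type*} [Fintype V] [Fintype X] [Fintype Z]
    (φ : V → X × Z → NNReal) (θ : V → X × Z → ℝ) (A : V → X × Z → ℂ)
    (hA : ∀ v x z,
      A v (x, z) = Complex.exp (2 * Real.pi * Complex.I * (θ v (x, z) : ℂ))
        * ((Real.sqrt (φ v (x, z)) : ℝ) : ℂ)) :
    (∀ x : X,
      (∑ z : Z, ∏ v : V, A v (x, z) * (starRingEnd ℂ) (A v (x, z)))
        = (((∑ z : Z, ∏ v : V, φ v (x, z) : NNReal) : ℝ) : ℂ)) ∧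
    ((0 < ∑ x : X, ∑ z : Z, ∏ v : V, φ v (x, z)) →
      ∀ x : X,
        (∑ z : Z, ∏ v : V, A v (x, z) * (starRingEnd ℂ) (A v (x, z)))
            / (∑ x' : X, ∑ z : Z, ∏ v : V, A v (x', z) * (starRingEnd ℂ) (A v (x', z)))
          = ((((∑ z : Z, ∏ v : V, φ v (x, z))
              / (∑ x' : X, ∑ z : Z, ∏ v : V, φ v (x', z)) : NNReal) : ℝ) : ℂ)) := by
  have h_core : ∀ v x z, A v (x, z) * (starRingEnd ℂ) (A v (x, z)) = ((φ v (x, z) : ℝ) : ℂ) := by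
    intro v x z
    rw [hA, mul_conj_exp_two_pi_I_mul_ofReal, Real.sq_sqrt (φ v (x, z)).coe_nonneg]
  have h_dist := bornMachineUnnormalized_eq_ugmUnnormalized h_core
  refine ⟨h_dist, fun _ x => ?_⟩
  change bornMachineUnnormalized A x / ∑ x', bornMachineUnnormalized A x'
    = ((ugmUnnormalized φ x / ∑ x', ugmUnnormalized φ x' : NNReal) : ℝ)
  simp only [h_dist]
  push_cast
  rfl
end

section
/- Let V_A, V_B be finite index sets and X_A, X_B, H_A, H_B, Z_A, Z_B, Z_C finite types. Suppose A_v : X_A × H_A × Z_A × Z_C → ℂ for v ∈ V_A and B_w : X_B × H_B × Z_B × Z_C → ℂ for w ∈ V_B. Define the extended DBM distribution in which the decohered cut-set variable z_C is read out as a visible random variable: Q(x_A, x_B, z_C) = ∑_{z_A, z_B} ∑_{h_A, h_A'} ∑_{h_B, h_B'} (∏_{v∈V_A} A_v(x_A,h_A,z_A,z_C) · conj(A_v(x_A,h_A',z_A,z_C))) · (∏_{w∈V_B} B_w(x_B,h_B,z_B,z_C) · conj(B_w(x_B,h_B',z_B,z_C))). Then Q factorizes: Q(x_A,x_B,z_C)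 = f(x_A,z_C) · g(x_B,z_C), where f(x_A,z_C) = ∑_{z_A} |∑_{h_A} ∏_{v∈V_A} A_v(x_A,h_A,z_A,z_C)|² and g(x_B,z_C) = ∑_{z_B} |∑_{h_B} ∏_{w∈V_B} B_w(x_B,h_B,z_B,z_C)|² are nonnegative real-valued functions. -/
/-! Reading out the cut-set variable `z_C` fixes it, so the two groups of cores no longer share
any summed index. For fixed `z_A, z_B` the four hidden sums then split into a product of two double
sums, and each double sum `∑ h, ∑ h', F h * conj (F h')` is `|∑ h, F h|²`. -/

open Finset ComplexConjugate

theorem Complex.sum_sum_mul_conj {ι : Type*} (s : Finset ι) (F : ι → ℂ) :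
    ∑ i ∈ s, ∑ j ∈ s, F i * conj (F j) = ((‖∑ i ∈ s, F i‖ ^ 2 : ℝ) : ℂ) := by
  rw [← sum_mul_sum, ← map_sum, Complex.mul_conj']
  norm_cast

theorem Complex.prod_mul_conj {ι : Type*} (s : Finset ι) (f g : ι → ℂ) :
    ∏ i ∈ s, f i * conj (g i) = (∏ i ∈ s, f i) * conj (∏ i ∈ s, g i) := by
  rw [prod_mul_distrib, map_prod]

theorem Complex.sum_sum_sum_sum_mul_conj_mul_mul_conj {ι κ : Type*} (s : Finset ι) (t : Finset κ)
    (F : ι → ℂ) (G : κ → ℂ) :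
    ∑ i ∈ s, ∑ i' ∈ s, ∑ k ∈ t, ∑ k' ∈ t, F i * conj (F i') * (G k * conj (G k')) =
      ((‖∑ i ∈ s, F i‖ ^ 2 * ‖∑ k ∈ t, G k‖ ^ 2 : ℝ) : ℂ) := by
  rw [Complex.ofReal_mul, ← Complex.sum_sum_mul_conj, ← Complex.sum_sum_mul_conj]
  simp_rw [sum_mul, mul_sum]

theorem dbm_cut_set_factorization_general
    {VA VB XA XB HA HB ZA ZB ZC : Type*}
    [Fintype VA] [Fintype VB]
    [Fintype HA] [Fintype HB] [Fintype ZA] [Fintype ZB]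
    (A : VA → XA × HA × ZA × ZC → ℂ) (B : VB → XB × HB × ZB × ZC → ℂ)
    (xA : XA) (xB : XB) (zC : ZC) :
    (∑ zA : ZA, ∑ zB : ZB, ∑ hA : HA, ∑ hA' : HA, ∑ hB : HB, ∑ hB' : HB,
        (∏ v : VA, A v (xA, hA, zA, zC) * (starRingEnd ℂ) (A v (xA, hA', zA, zC))) *
        (∏ w : VB, B w (xB, hB, zB, zC) * (starRingEnd ℂ) (B w (xB, hB', zB, zC))))
      = (((∑ zA : ZA, ‖∑ hA : HA, ∏ v : VA, A v (xA, hA, zA, zC)‖ ^ 2) *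
          (∑ zB : ZB, ‖∑ hB : HB, ∏ w : VB, B w (xB, hB, zB, zC)‖ ^ 2) : ℝ) : ℂ) ∧
    0 ≤ ∑ zA : ZA, ‖∑ hA : HA, ∏ v : VA, A v (xA, hA, zA, zC)‖ ^ 2 ∧
    0 ≤ ∑ zB : ZB, ‖∑ hB : HB, ∏ w : VB, B w (xB, hB, zB, zC)‖ ^ 2 := by
  refine ⟨?_, sum_nonneg fun _ _ ↦ sq_nonneg _, sum_nonneg fun _ _ ↦ sq_nonneg _⟩
  simp_rw [Complex.prod_mul_conj, Complex.sum_sum_sum_sum_mul_conj_mul_mul_conj, sum_mul_sum]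
  push_cast
  rfl

/-- For a DBM whose cores split into two groups interacting only through a
decohered cut-set variable `z_C` that is read out as a visible random variable, the
extended distribution `Q(x_A, x_B, z_C)` factorizes as a product
`f(x_A, z_C) · g(x_B, z_C)` of two nonnegative real-valued functions. -/
theorem dbm_cut_set_factorization
    {VA VB XA XB HA HB ZA ZB ZC : Type*}
    [Fintype VA] [Fintype VB] [Fintype XA] [Fintype XB]
    [Fintype HA] [Fintype HB] [Fintype ZA] [Fintype ZB] [Fintype ZC]
    (A : VA → XA × HA × ZA × ZC → ℂ) (B : VB → XB × HB × ZB × ZC → ℂ)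
    (xA : XA) (xB : XB) (zC : ZC) :
    (∑ zA : ZA, ∑ zB : ZB, ∑ hA : HA, ∑ hA' : HA, ∑ hB : HB, ∑ hB' : HB,
        (∏ v : VA, A v (xA, hA, zA, zC) * (starRingEnd ℂ) (A v (xA, hA', zA, zC))) *
        (∏ w : VB, B w (xB, hB, zB, zC) * (starRingEnd ℂ) (B w (xB, hB', zB, zC))))
      = (((∑ zA : ZA, ‖∑ hA : HA, ∏ v : VA, A v (xA, hA, zA, zC)‖ ^ 2) *
          (∑ zB : ZB, ‖∑ hB : HB, ∏ w : VB, B w (xB, hB, zB, zC)‖ ^ 2) : ℝ) : ℂ) ∧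
    0 ≤ ∑ zA : ZA, ‖∑ hA : HA, ∏ v : VA, A v (xA, hA, zA, zC)‖ ^ 2 ∧
    0 ≤ ∑ zB : ZB, ‖∑ hB : HB, ∏ w : VB, B w (xB, hB, zB, zC)‖ ^ 2 :=
  dbm_cut_set_factorization_general A B xA xB zC
end

section
/- Let V be a finite index set, X and H finite types, E a finite set of decohered edges with dimensions d : E → ℕ (d_e ≥ 1), Z = ∏_{e∈E} Fin d_e, and A_v : X × H × Z → ℂ complex cores for v ∈ V. Let f : E → V be any function assigning each decohered edge to a core, and define purification types P_v = ∏_{e ∈ f⁻¹{v}} Fin d_e and LPS cores C_v : X × (H × Z) × P_v → ℂ by C_v(x,(h,z),p) = A_v(x,h,z) if p_e = z_e for all e ∈ f⁻¹{v}, and C_v(x,(h,z),p) = 0 otherwise. Then the locally purified state with cores C_v has the same unnormalized distribution as the decohered Born machine with cores A_v: for all x ∈ X, ∑_{p ∈ ∏_{v∈V} P_v} |∑_{(h,z) ∈ H × Z} ∏_{v∈V} C_v(x,(h,z),p_v)|² = ∑_{z∈Z} |∑_{h∈H} ∏_{v∈V} A_v(x,h,z)|². In particular the purification dimension at node v is d^(v)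 = ∏_{e ∈ f⁻¹(v)} d_e. -/
/-!
Regroup the decohered indices `z : ∏ₑ Fin dₑ` by the core they are assigned to: this gives a
bijection `z ↦ (v ↦ z|_{f⁻¹ v})` onto the purification indices `p`. For fixed `p`, the product of
the copy cores vanishes unless `z` is the preimage of `p`, so the sum over `(h, z)` collapses to
the DBM amplitude at that `z`; reindexing the outer sum along the bijection gives the DBM
distribution.
-/

namespace Equiv

variable {E V : Type*} {β : E → Type*} (f : E → V)

abbrev piFiberwise : ((e : E) → β e) ≃ ((v : V) → (e : {e : E // f e = v}) → β e.1) :=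
  piCongrFiberwise fun _ => Equiv.refl _

theorem forall_piFiberwise_eq_iff {z₀ z : (e : E) → β e} :
    (∀ v (e : {e : E // f e = v}), piFiberwise f z₀ v e = z e.1) ↔ z₀ = z :=
  ⟨fun h => funext fun e => h (f e) ⟨e, rfl⟩, fun h => h ▸ fun _ _ => rfl⟩

end Equiv

open Equiv in
theorem Fintype.sum_prod_ite_piFiberwise_eq {E V R : Type*} {β : E → Type*} [Fintype V]
    [DecidableEq V] [Fintype E] [DecidableEq E] [∀ e, Fintype (β e)] [∀ e, DecidableEq (β e)]
    [CommSemiring R] (f : E → V) (g : ((e : E) → β e) → V → R) (z₀ : (e : E) → β e) :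
    ∑ z, ∏ v, (if ∀ e : {e : E // f e = v}, piFiberwise f z₀ v e = z e.1 then g z v else 0)
      = ∏ v, g z₀ v := by
  simp_rw [Fintype.prod_ite_zero, forall_piFiberwise_eq_iff, Fintype.sum_ite_eq]

theorem dbm_as_lps_general
    {V X H E : Type*} [Fintype V] [DecidableEq V] [Fintype H]
    [Fintype E] [DecidableEq E]
    (d : E → ℕ)
    (A : V → X × H × ((e : E) → Fin (d e)) → ℂ)
    (f : E → V)
    (C : (v : V) → X × (H × ((e : E) → Fin (d e)))
          × ((e : {e : E // f e = v}) → Fin (d e.1)) → ℂ)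
    (hC : ∀ (v : V) (x : X) (h : H) (z : (e : E) → Fin (d e))
        (p : (e : {e : E // f e = v}) → Fin (d e.1)),
      C v (x, (h, z), p)
        = if ∀ e : {e : E // f e = v}, p e = z e.1 then A v (x, h, z) else 0) :
    ∀ x : X,
      (∑ p : (v : V) → ((e : {e : E // f e = v}) → Fin (d e.1)),
          ‖∑ hz : H × ((e : E) → Fin (d e)),
            ∏ v : V, C v (x, hz, p v)‖ ^ 2)
        = ∑ z : (e : E) → Fin (d e),
            ‖∑ h : H, ∏ v : V, A v (x, h, z)‖ ^ 2 := by
  intro x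
  rw [← (Equiv.piFiberwise (β := fun e => Fin (d e)) f).sum_comp]
  refine Fintype.sum_congr _ _ fun z₀ => ?_
  simp_rw [Fintype.sum_prod_type, hC,
    Fintype.sum_prod_ite_piFiberwise_eq f (fun z v => A v (x, _, z))]

/-- Theorem 5 of the paper, DBM → LPS: Given a DBM with decohered edges `E`
of dimensions `d_e` and an assignment `f : E → V` of decohered edges to cores, the LPS
whose core at `v` carries the purification type `∏_{e ∈ f⁻¹{v}} Fin (d e)` (of dimension
`∏_{e ∈ f⁻¹(v)} d_e`) and whose values copy the decohered indices into the purification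
indices has the same unnormalized distribution as the DBM. -/
theorem dbm_as_lps
    {V X H E : Type*} [Fintype V] [DecidableEq V] [Fintype X] [Fintype H]
    [Fintype E] [DecidableEq E]
    (d : E → ℕ) (hd : ∀ e, 1 ≤ d e)
    (A : V → X × H × ((e : E) → Fin (d e)) → ℂ)
    (f : E → V)
    (C : (v : V) → X × (H × ((e : E) → Fin (d e)))
          × ((e : {e : E // f e = v}) → Fin (d e.1)) → ℂ)
    (hC : ∀ (v : V) (x : X) (h : H) (z : (e : E) → Fin (d e))
        (p : (e : {e : E // f e = v}) → Fin (d e.1)),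
      C v (x, (h, z), p)
        = if ∀ e : {e : E // f e = v}, p e = z e.1 then A v (x, h, z) else 0) :
    ∀ x : X,
      (∑ p : (v : V) → ((e : {e : E // f e = v}) → Fin (d e.1)),
          ‖∑ hz : H × ((e : E) → Fin (d e)),
            ∏ v : V, C v (x, hz, p v)‖ ^ 2)
        = ∑ z : (e : E) → Fin (d e),
            ‖∑ h : H, ∏ v : V, A v (x, h, z)‖ ^ 2 :=
  dbm_as_lps_general d A f C hC
end
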